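/- Define g : [0,1]³ → ℝ by g(x,y,z) := √(C(x,y,z) + D(x,y,z)) + √(C(x,y,z) − D(x,y,z)), where C(x,y,z) := (x²y² + (1−x²)z² + (1−y²)z²)/4 and D(x,y,z) := (√(1−x²)·√(1−y²)·z²)/2. Define the lower tri-convex envelope ğ : [0,1]³ → ℝ by ğ(x,y,z) := sup { θ(x,y,z) | θ : [0,1]³ → [0,1], θ ≤ g pointwise on [0,1]³, and θ is tri-convex on [0,1]³ }. Let α : Fin ℓ → ℝ, β : Fin m → ℝ, γ : Fin n → ℝ be nonnegative weights each summing to 1, and let x : Fin ℓ → [0,1], y : Fin m → [0,1], z : Fin n → [0,1]. Then ∑_{i,j,k} α_i β_j γ_k g(x_i, y_j, z_k) ≥ ğ(∑_i α_i x_i, ∑_j β_j y_j, ∑_k γ_k z_k). (This is the statement that for BMS channels U, V, W, Z((U Ｐ V) Ｓ W) ≥ ğ(Z(U), Z(V), Z(W)).) -/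

import Mathlib

/-- `C(x,y,z) := (x²y² + (1−x²)z² + (1−y²)z²)/4`. -/
noncomputable def Cfun (x y z : ℝ) : ℝ :=
  (x ^ 2 * y ^ 2 + (1 - x ^ 2) * z ^ 2 + (1 - y ^ 2) * z ^ 2) / 4

/-- `D(x,y,z) := (√(1−x²)·√(1−y²)·z²)/2`. -/
noncomputable def Dfun (x y z : ℝ) : ℝ :=
  Real.sqrt (1 - x ^ 2) * Real.sqrt (1 - y ^ 2) * z ^ 2 / 2

/-- `g(x,y,z) := √(C+D) + √(C−D)`, the tri-variate Bhattacharyya function. -/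
noncomputable def gfun (x y z : ℝ) : ℝ :=
  Real.sqrt (Cfun x y z + Dfun x y z) + Real.sqrt (Cfun x y z - Dfun x y z)

/-- `θ` is tri-convex on `[0,1]³`: convex on `[0,1]` in each argument, for all
fixed values in `[0,1]` of the other two arguments. -/
def TriConvexOn01 (θ : ℝ → ℝ → ℝ → ℝ) : Prop :=
  (∀ y ∈ Set.Icc (0 : ℝ) 1, ∀ z ∈ Set.Icc (0 : ℝ) 1,
    ConvexOn ℝ (Set.Icc (0 : ℝ) 1) (fun x => θ x y z)) ∧
  (∀ x ∈ Set.Icc (0 : ℝ) 1, ∀ z ∈ Set.Icc (0 : ℝ) 1,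
    ConvexOn ℝ (Set.Icc (0 : ℝ) 1) (fun y => θ x y z)) ∧
  (∀ x ∈ Set.Icc (0 : ℝ) 1, ∀ y ∈ Set.Icc (0 : ℝ) 1,
    ConvexOn ℝ (Set.Icc (0 : ℝ) 1) (fun z => θ x y z))

/-- The lower tri-convex envelope of `g`:
`ğ(x,y,z) := sup { θ(x,y,z) | θ : [0,1]³ → [0,1], θ ≤ g pointwise, θ tri-convex }`. -/
noncomputable def gEnv (x y z : ℝ) : ℝ :=
  sSup { t : ℝ | ∃ θ : ℝ → ℝ → ℝ → ℝ,
    (∀ a ∈ Set.Icc (0 : ℝ) 1, ∀ b ∈ Set.Icc (0 : ℝ) 1, ∀ c ∈ Set.Icc (0 : ℝ) 1,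
      θ a b c ∈ Set.Icc (0 : ℝ) 1 ∧ θ a b c ≤ gfun a b c) ∧
    TriConvexOn01 θ ∧ θ x y z = t }

lemma gfun_nonneg (x y z : ℝ) : 0 ≤ gfun x y z :=
  add_nonneg (Real.sqrt_nonneg _) (Real.sqrt_nonneg _)

lemma Convex.sum_mul_mem {s : Set ℝ} (hs : Convex ℝ s) {ι : Type*} {t : Finset ι}
    {w p : ι → ℝ} (hw : ∀ i ∈ t, 0 ≤ w i) (hw₁ : ∑ i ∈ t, w i = 1) (hp : ∀ i ∈ t, p i ∈ s) :
    ∑ i ∈ t, w i * p i ∈ s := by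
  simpa only [smul_eq_mul] using hs.sum_mem hw hw₁ hp

lemma ConvexOn.map_sum_mul_le {s : Set ℝ} {f : ℝ → ℝ} (hf : ConvexOn ℝ s f) {ι : Type*}
    {t : Finset ι} {w p : ι → ℝ} (hw : ∀ i ∈ t, 0 ≤ w i) (hw₁ : ∑ i ∈ t, w i = 1)
    (hp : ∀ i ∈ t, p i ∈ s) :
    f (∑ i ∈ t, w i * p i) ≤ ∑ i ∈ t, w i * f (p i) := by
  simpa only [smul_eq_mul] using hf.map_sum_le hw hw₁ hp

lemma TriConvexOn01.map_sum_le {θ : ℝ → ℝ → ℝ → ℝ} (hθ : TriConvexOn01 θ)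
    {ι κ ν : Type*} [Fintype ι] [Fintype κ] [Fintype ν]
    {α x : ι → ℝ} {β y : κ → ℝ} {γ z : ν → ℝ}
    (hα : ∀ i, 0 ≤ α i) (hβ : ∀ j, 0 ≤ β j) (hγ : ∀ k, 0 ≤ γ k)
    (hα₁ : ∑ i, α i = 1) (hβ₁ : ∑ j, β j = 1) (hγ₁ : ∑ k, γ k = 1)
    (hx : ∀ i, x i ∈ Set.Icc (0 : ℝ) 1) (hy : ∀ j, y j ∈ Set.Icc (0 : ℝ) 1)
    (hz : ∀ k, z k ∈ Set.Icc (0 : ℝ) 1) :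
    θ (∑ i, α i * x i) (∑ j, β j * y j) (∑ k, γ k * z k)
      ≤ ∑ i, ∑ j, ∑ k, α i * β j * γ k * θ (x i) (y j) (z k) := by
  obtain ⟨hθx, hθy, hθz⟩ := hθ
  have hY := (convex_Icc (0 : ℝ) 1).sum_mul_mem (fun j _ => hβ j) hβ₁ (fun j _ => hy j)
  have hZ := (convex_Icc (0 : ℝ) 1).sum_mul_mem (fun k _ => hγ k) hγ₁ (fun k _ => hz k)
  calc θ (∑ i, α i * x i) (∑ j, β j * y j) (∑ k, γ k * z k)
      ≤ ∑ i, α i * θ (x i) (∑ j, β j * y j) (∑ k, γ k * z k) :=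
        (hθx _ hY _ hZ).map_sum_mul_le (fun i _ => hα i) hα₁ (fun i _ => hx i)
    _ ≤ ∑ i, α i * ∑ j, β j * θ (x i) (y j) (∑ k, γ k * z k) := by
        gcongr with i
        · exact hα i
        · exact (hθy _ (hx i) _ hZ).map_sum_mul_le (fun j _ => hβ j) hβ₁ (fun j _ => hy j)
    _ ≤ ∑ i, α i * ∑ j, β j * ∑ k, γ k * θ (x i) (y j) (z k) := by
        gcongr with i _ j
        · exact hα i
        · exact hβ j
        · exact (hθz _ (hx i) _ (hy j)).map_sum_mul_le (fun k _ => hγ k) hγ₁ (fun k _ => hz k)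
    _ = ∑ i, ∑ j, ∑ k, α i * β j * γ k * θ (x i) (y j) (z k) := by
        simp only [Finset.mul_sum, mul_assoc]

/-- For BMS channels `U, V, W` with BSC-decompositions given by the mixtures
`(α, x)`, `(β, y)`, `(γ, z)` of Bhattacharyya parameters,
`Z((U Ｐ V) Ｓ W) = ∑ α_i β_j γ_k g(x_i, y_j, z_k) ≥ ğ(Z(U), Z(V), Z(W))`. -/
theorem stmt_12 (l m n : ℕ) (α : Fin l → ℝ) (β : Fin m → ℝ) (γ : Fin n → ℝ)
    (hα : ∀ i, 0 ≤ α i) (hβ : ∀ j, 0 ≤ β j) (hγ : ∀ k, 0 ≤ γ k)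
    (hαsum : ∑ i, α i = 1) (hβsum : ∑ j, β j = 1) (hγsum : ∑ k, γ k = 1)
    (x : Fin l → ℝ) (y : Fin m → ℝ) (z : Fin n → ℝ)
    (hx : ∀ i, x i ∈ Set.Icc (0 : ℝ) 1) (hy : ∀ j, y j ∈ Set.Icc (0 : ℝ) 1)
    (hz : ∀ k, z k ∈ Set.Icc (0 : ℝ) 1) :
    ∑ i, ∑ j, ∑ k, α i * β j * γ k * gfun (x i) (y j) (z k)
      ≥ gEnv (∑ i, α i * x i) (∑ j, β j * y j) (∑ k, γ k * z k) := by
  have hweight : ∀ i j k, 0 ≤ α i * β j * γ k := fun i j k =>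
    mul_nonneg (mul_nonneg (hα i) (hβ j)) (hγ k)
  -- `sSup` of an empty or unbounded set is `0`, so the bound must also be nonnegative.
  refine Real.sSup_le ?_ (Finset.sum_nonneg fun i _ => Finset.sum_nonneg fun j _ =>
    Finset.sum_nonneg fun k _ => mul_nonneg (hweight i j k) (gfun_nonneg _ _ _))
  rintro t ⟨θ, hθg, hθ, rfl⟩
  calc θ (∑ i, α i * x i) (∑ j, β j * y j) (∑ k, γ k * z k)
      ≤ ∑ i, ∑ j, ∑ k, α i * β j * γ k * θ (x i) (y j) (z k) :=
        hθ.map_sum_le hα hβ hγ hαsum hβsum hγsum hx hy hz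
    _ ≤ ∑ i, ∑ j, ∑ k, α i * β j * γ k * gfun (x i) (y j) (z k) := by
        gcongr with i _ j _ k
        · exact hweight i j k
        · exact (hθg _ (hx i) _ (hy j) _ (hz k)).2
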